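/- Define c(k) = log( 2^{2k²−k} / π^k · G(k+1)^4 / G(2k+1) ) for nonnegative integers k, with G the Barnes G-function, and κ_j = 4^{−j−1/2} √(2j+1) (2j)!/(j!)² for j ≥ 1, κ_0 = 1/2. Then c(k) = −∑_{j=0}^{k−1} log(2π κ_j²) for all k ≥ 1, and c(0) = 0. -/
import Mathlib


/-- κ_j = 4^{-j-1/2} √(2j+1) (2j)!/(j!)²; for j = 0 this equals 1/2. -/
noncomputable def kappa (j : ℕ) : ℝ :=
  (4 : ℝ) ^ (-(j : ℝ) - 1/2) * Real.sqrt (2 * (j : ℝ) + 1) *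
    (Nat.factorial (2 * j) : ℝ) / ((Nat.factorial j : ℝ)) ^ 2

/-- Barnes G-function on positive integers: G(n+1) = ∏_{m=1}^{n-1} m!,
so G(1) = 1 and G(m+1) = (m-1)!·G(m). -/
noncomputable def barnesG (n : ℕ) : ℝ :=
  ∏ m ∈ Finset.range (n - 1), (Nat.factorial m : ℝ)

/-- c(k) = log( 2^{2k²-k}/π^k · G(k+1)⁴/G(2k+1) ). -/
noncomputable def cconst (k : ℕ) : ℝ :=
  Real.log ((2 : ℝ) ^ (2 * k ^ 2 - k) / Real.pi ^ k *
    (barnesG (k + 1)) ^ 4 / barnesG (2 * k + 1))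

lemma barnesG_pos (n : ℕ) : 0 < barnesG n := by
  exact Finset.prod_pos fun m _ => by positivity

lemma kappa_pos (k : ℕ) : 0 < kappa k := by
  unfold kappa
  have h1 : (0:ℝ) < 2 * (k:ℝ) + 1 := by positivity
  positivity

lemma kappa_sq (k : ℕ) :
    (kappa k) ^ 2 = (2 * (k:ℝ) + 1) * ((Nat.factorial (2 * k) : ℝ)) ^ 2 /
      ((4:ℝ) ^ (2 * k + 1) * ((Nat.factorial k : ℝ)) ^ 4) := by
  unfold kappa
  have h1 : (0:ℝ) ≤ 2 * (k:ℝ) + 1 := by positivity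
  have h2 : ((4:ℝ) ^ (-(k:ℝ) - 1/2)) ^ 2 = ((4:ℝ) ^ (2 * k + 1))⁻¹ := by
    rw [← Real.rpow_natCast ((4:ℝ) ^ (-(k:ℝ) - 1/2)) 2, ← Real.rpow_mul (by norm_num)]
    have : (-(k:ℝ) - 1/2) * (2:ℕ) = -((2 * k + 1 : ℕ) : ℝ) := by push_cast; ring
    rw [this, Real.rpow_neg (by norm_num), Real.rpow_natCast]
  have h3 : Real.sqrt (2 * (k:ℝ) + 1) ^ 2 = 2 * (k:ℝ) + 1 := Real.sq_sqrt h1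
  rw [div_pow, mul_pow, mul_pow, h2, h3]
  field_simp

lemma cconst_step (k : ℕ) :
    cconst (k + 1) = cconst k - Real.log (2 * Real.pi * (kappa k) ^ 2) := by
  have hπ : (0:ℝ) < Real.pi := Real.pi_pos
  have hG1 : 0 < barnesG (k + 1) := barnesG_pos _
  have hG2 : 0 < barnesG (2 * k + 1) := barnesG_pos _
  have hFk : (0:ℝ) < (Nat.factorial k : ℝ) := by positivity
  have hF2k : (0:ℝ) < (Nat.factorial (2 * k) : ℝ) := by positivity
  have hκ : 0 < kappa k := kappa_pos k
  -- barnesG recurrences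
  have hGa : barnesG (k + 2) = barnesG (k + 1) * (Nat.factorial k : ℝ) := by
    unfold barnesG
    simp [Finset.prod_range_succ]
  have hGb : barnesG (2 * (k + 1) + 1) =
      barnesG (2 * k + 1) * (Nat.factorial (2 * k) : ℝ) *
        (Nat.factorial (2 * k + 1) : ℝ) := by
    unfold barnesG
    have : 2 * (k + 1) + 1 - 1 = (2 * k) + 1 + 1 := by omega
    rw [this]
    have h2 : 2 * k + 1 - 1 = 2 * k := by omega
    rw [h2, Finset.prod_range_succ, Finset.prod_range_succ]
  have hexp : 2 * (k + 1) ^ 2 - (k + 1) = (2 * k ^ 2 - k) + (4 * k + 1) := by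
    have hk : k ≤ 2 * k ^ 2 := by nlinarith
    have h1 : (k + 1) ^ 2 = k ^ 2 + 2 * k + 1 := by ring
    omega
  have hfac : (Nat.factorial (2 * k + 1) : ℝ) =
      (2 * (k:ℝ) + 1) * (Nat.factorial (2 * k) : ℝ) := by
    rw [Nat.factorial_succ]; push_cast; ring
  have h4 : ((4:ℝ)) ^ (2 * k + 1) = 2 ^ (4 * k + 2) := by
    have : (4:ℝ) = 2 ^ 2 := by norm_num
    rw [this, ← pow_mul]
    congr 1
    omega
  have hA : (2 : ℝ) ^ (2 * (k+1) ^ 2 - (k+1)) / Real.pi ^ (k+1) *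
      (barnesG ((k+1) + 1)) ^ 4 / barnesG (2 * (k+1) + 1) =
      ((2 : ℝ) ^ (2 * k ^ 2 - k) / Real.pi ^ k * (barnesG (k + 1)) ^ 4 /
        barnesG (2 * k + 1)) / (2 * Real.pi * (kappa k) ^ 2) := by
    rw [kappa_sq, hexp, pow_add, hGa, hGb, hfac, h4]
    have h2k1 : (0:ℝ) < 2 * (k:ℝ) + 1 := by positivity
    field_simp
    ring
  unfold cconst
  rw [hA, Real.log_div (by positivity) (by positivity)]

/-- c(k) = -∑_{j=0}^{k-1} log(2π κ_j²) for all k ≥ 1, and c(0) = 0. -/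
theorem cconst_eq_neg_sum_log :
    (∀ k : ℕ, 1 ≤ k →
      cconst k = -∑ j ∈ Finset.range k, Real.log (2 * Real.pi * (kappa j) ^ 2))
    ∧ cconst 0 = 0 := by
  have h0 : cconst 0 = 0 := by
    unfold cconst barnesG
    norm_num
  have hall : ∀ k : ℕ,
      cconst k = -∑ j ∈ Finset.range k, Real.log (2 * Real.pi * (kappa j) ^ 2) := by
    intro k
    induction k with
    | zero => simpa using h0
    | succ n ih =>
      rw [cconst_step, ih, Finset.sum_range_succ]
      ring
  exact ⟨fun k _ => hall k, h0⟩
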